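/- arXiv:2505.09197 — 4 statements merged into one kernel-verified Lean document; each statement's English description precedes it below -/
import Mathlib

section
/- Let σ > 0, σ₀ > 0 and let y, y₀, μ₀ ∈ ℝ. Define ICC = σ₀²/(σ² + σ₀²), μ* = ICC·y₀ + (1 − ICC)·μ₀, and σ* = √(1 + ICC)·σ. Then ∫_ℝ φ(y; x, σ)·φ(y₀; x, σ)·φ(x; μ₀, σ₀) dx = φ(y; μ*, σ*)·φ(y₀; μ₀, √(σ² + σ₀²)). In particular, the conditional density of a post-measurement Y given a baseline measurement Y₀ = y₀, when both are independent N(x₀, σ) draws with x₀ ~ N(μ₀, σ₀), is the normal density with mean μ* and standard deviation σ*. -/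
set_option maxHeartbeats 1600000

open MeasureTheory

/-- The normal probability density function with mean `a` and standard deviation `b`. -/
noncomputable def gaussPdf (x a b : ℝ) : ℝ :=
  (2 * Real.pi * b ^ 2) ^ (-(1 : ℝ) / 2) * Real.exp (-(x - a) ^ 2 / (2 * b ^ 2))

lemma gauss_int (a b c : ℝ) (ha : 0 < a) :
    (∫ x : ℝ, Real.exp (-(a * x ^ 2 + b * x + c)))
      = Real.sqrt (Real.pi / a) * Real.exp (b ^ 2 / (4 * a) - c) := by
  have h : ∀ x : ℝ, -(a * x ^ 2 + b * x + c)
      = -a * (x + b / (2 * a)) ^ 2 + (b ^ 2 / (4 * a) - c) := by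
    intro x; field_simp; ring
  simp_rw [h, Real.exp_add, integral_mul_const]
  congr 1
  rw [show (∫ x : ℝ, Real.exp (-a * (x + b / (2 * a)) ^ 2))
      = ∫ x : ℝ, Real.exp (-a * x ^ 2) from
    integral_add_right_eq_self (fun x => Real.exp (-a * x ^ 2)) (b / (2 * a))]
  exact integral_gaussian a

lemma rpow_neg_half (u : ℝ) (hu : 0 < u) : u ^ (-(1:ℝ)/2) = (Real.sqrt u)⁻¹ := by
  rw [show (-(1:ℝ)/2) = -(1/2) by norm_num, Real.rpow_neg hu.le, ← Real.sqrt_eq_rpow]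

theorem stmt_0 (σ σ₀ : ℝ) (hσ : 0 < σ) (hσ₀ : 0 < σ₀) (y y₀ μ₀ : ℝ)
    (ICC : ℝ) (hICC : ICC = σ₀ ^ 2 / (σ ^ 2 + σ₀ ^ 2))
    (μs : ℝ) (hμs : μs = ICC * y₀ + (1 - ICC) * μ₀)
    (σs : ℝ) (hσs : σs = Real.sqrt (1 + ICC) * σ) :
    (∫ x : ℝ, gaussPdf y x σ * gaussPdf y₀ x σ * gaussPdf x μ₀ σ₀)
      = gaussPdf y μs σs * gaussPdf y₀ μ₀ (Real.sqrt (σ ^ 2 + σ₀ ^ 2)) := by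
  have hs2 : (0:ℝ) < σ ^ 2 := by positivity
  have hs02 : (0:ℝ) < σ₀ ^ 2 := by positivity
  have hsum : (0:ℝ) < σ ^ 2 + σ₀ ^ 2 := by positivity
  have hICCpos : 0 < ICC := by rw [hICC]; positivity
  have h1I : (0:ℝ) < 1 + ICC := by linarith
  set A : ℝ := 1 / σ ^ 2 + 1 / (2 * σ₀ ^ 2) with hA
  set B : ℝ := -((y + y₀) / σ ^ 2 + μ₀ / σ₀ ^ 2) with hB
  set C : ℝ := (y ^ 2 + y₀ ^ 2) / (2 * σ ^ 2) + μ₀ ^ 2 / (2 * σ₀ ^ 2) with hC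
  have hApos : 0 < A := by rw [hA]; positivity
  set K : ℝ := (2 * Real.pi * σ ^ 2) ^ (-(1:ℝ)/2) * (2 * Real.pi * σ ^ 2) ^ (-(1:ℝ)/2)
      * (2 * Real.pi * σ₀ ^ 2) ^ (-(1:ℝ)/2) with hK
  have key : ∀ x : ℝ, gaussPdf y x σ * gaussPdf y₀ x σ * gaussPdf x μ₀ σ₀
      = K * Real.exp (-(A * x ^ 2 + B * x + C)) := by
    intro x
    simp only [gaussPdf, hK]
    rw [show ∀ p q r E F G : ℝ, p * E * (q * F) * (r * G) = p * q * r * (E * F * G) from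
      fun _ _ _ _ _ _ => by ring, ← Real.exp_add, ← Real.exp_add]
    congr 1
    rw [hA, hB, hC]
    field_simp
    ring
  simp_rw [key, integral_const_mul, gauss_int A B C hApos]
  -- σs², t² facts
  have hσs2 : σs ^ 2 = (1 + ICC) * σ ^ 2 := by
    rw [hσs, mul_pow, Real.sq_sqrt h1I.le]
  have ht2 : (Real.sqrt (σ ^ 2 + σ₀ ^ 2)) ^ 2 = σ ^ 2 + σ₀ ^ 2 := Real.sq_sqrt hsum.le
  have hσspos : 0 < σs := by rw [hσs]; positivity
  have htpos : 0 < Real.sqrt (σ ^ 2 + σ₀ ^ 2) := Real.sqrt_pos.mpr hsum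
  have hexp : B ^ 2 / (4 * A) - C
      = -(y - μs) ^ 2 / (2 * σs ^ 2) + -(y₀ - μ₀) ^ 2 / (2 * Real.sqrt (σ ^ 2 + σ₀ ^ 2) ^ 2) := by
    rw [hσs2, ht2, hA, hB, hC, hμs, hICC]
    have h2 : σ ^ 2 + σ₀ ^ 2 + σ₀ ^ 2 ≠ 0 := by positivity
    field_simp
    ring
  have hpre : K * Real.sqrt (Real.pi / A)
      = (2 * Real.pi * σs ^ 2) ^ (-(1:ℝ)/2) * (2 * Real.pi * Real.sqrt (σ ^ 2 + σ₀ ^ 2) ^ 2) ^ (-(1:ℝ)/2) := by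
    have h1 : (0:ℝ) < 2 * Real.pi * σ ^ 2 := by positivity
    have h2 : (0:ℝ) < 2 * Real.pi * σ₀ ^ 2 := by positivity
    have h3 : (0:ℝ) < 2 * Real.pi * σs ^ 2 := by positivity
    have h4 : (0:ℝ) < 2 * Real.pi * Real.sqrt (σ ^ 2 + σ₀ ^ 2) ^ 2 := by positivity
    have h5 : (0:ℝ) < Real.pi / A := by positivity
    rw [hK, rpow_neg_half _ h1, rpow_neg_half _ h2, rpow_neg_half _ h3, rpow_neg_half _ h4]
    set L : ℝ := (Real.sqrt (2 * Real.pi * σ ^ 2))⁻¹ * (Real.sqrt (2 * Real.pi * σ ^ 2))⁻¹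
        * (Real.sqrt (2 * Real.pi * σ₀ ^ 2))⁻¹ * Real.sqrt (Real.pi / A) with hL
    set R : ℝ := (Real.sqrt (2 * Real.pi * σs ^ 2))⁻¹ * (Real.sqrt (2 * Real.pi * Real.sqrt (σ ^ 2 + σ₀ ^ 2) ^ 2))⁻¹ with hR
    have hLpos : 0 < L := by
      rw [hL]; positivity
    have hRpos : 0 < R := by rw [hR]; positivity
    have hA' : Real.pi / A = 2 * Real.pi * σ ^ 2 * σ₀ ^ 2 / (σ ^ 2 + 2 * σ₀ ^ 2) := by
      rw [hA]; field_simp; ring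
    have hσs2' : σs ^ 2 = σ ^ 2 * (σ ^ 2 + 2 * σ₀ ^ 2) / (σ ^ 2 + σ₀ ^ 2) := by
      rw [hσs2, hICC]; field_simp; ring
    have hsum2 : (0:ℝ) < σ ^ 2 + 2 * σ₀ ^ 2 := by positivity
    have hpi : (0:ℝ) < Real.pi := Real.pi_pos
    have hsq : L ^ 2 = R ^ 2 := by
      rw [hL, hR]
      rw [show ∀ a b c : ℝ, (a⁻¹ * a⁻¹ * b⁻¹ * c) ^ 2 = (a^2)⁻¹ * (a^2)⁻¹ * (b^2)⁻¹ * c^2 from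
        fun _ _ _ => by ring,
        show ∀ a b : ℝ, (a⁻¹ * b⁻¹) ^ 2 = (a^2)⁻¹ * (b^2)⁻¹ from fun _ _ => by ring,
        Real.sq_sqrt h1.le, Real.sq_sqrt h2.le, Real.sq_sqrt h3.le, Real.sq_sqrt h4.le,
        Real.sq_sqrt h5.le, hσs2', ht2, hA']
      field_simp
    calc L = Real.sqrt (L ^ 2) := (Real.sqrt_sq hLpos.le).symm
      _ = Real.sqrt (R ^ 2) := by rw [hsq]
      _ = R := Real.sqrt_sq hRpos.le
  simp only [gaussPdf]
  rw [hexp, Real.exp_add]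
  calc K * (Real.sqrt (Real.pi / A) *
        (Real.exp (-(y - μs) ^ 2 / (2 * σs ^ 2)) *
          Real.exp (-(y₀ - μ₀) ^ 2 / (2 * Real.sqrt (σ ^ 2 + σ₀ ^ 2) ^ 2))))
      = K * Real.sqrt (Real.pi / A) *
        (Real.exp (-(y - μs) ^ 2 / (2 * σs ^ 2)) *
          Real.exp (-(y₀ - μ₀) ^ 2 / (2 * Real.sqrt (σ ^ 2 + σ₀ ^ 2) ^ 2))) := by ring
    _ = _ := by rw [hpre]; ring
end

section
/- Let σ > 0, σ_Δ > 0, μ_Δ ∈ ℝ, η = σ_Δ²/(σ_Δ² + 2σ²) and ξ = |μ_Δ|/(√2·σ). If D is a random variable with density φ(d; 0, √2·σ) (the null model M₀), then the expectation of ln(BF₁₀)(D) = (1/2)( ln(1−η) − (1−η)((D − μ_Δ)/(√2σ))² + (D/(√2σ))² ) equals (1/2)·( ln(1 − η) + η − (1 − η)·ξ² ). -/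
/-!
Under the null model `D` has law `gaussianReal 0 (2σ²)`, and `ln BF₁₀(D)` is a quadratic
polynomial in `D`, so its expectation involves only the moments `𝔼[D] = 0` and `𝔼[D²] = 2σ²`.
-/

open MeasureTheory ProbabilityTheory NNReal

lemma gaussPdf_eq_gaussianPDFReal (x a b : ℝ) :
    gaussPdf x a b = gaussianPDFReal a (b ^ 2).toNNReal x := by
  rw [gaussPdf, gaussianPDFReal_def, Real.coe_toNNReal _ (sq_nonneg b), Real.sqrt_eq_rpow,
    ← Real.rpow_neg (by positivity), neg_div]

lemma integral_mul_gaussPdf (f : ℝ → ℝ) (a : ℝ) {b : ℝ} (hb : b ≠ 0) :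
    ∫ x, f x * gaussPdf x a b = ∫ x, f x ∂gaussianReal a (b ^ 2).toNNReal := by
  rw [integral_gaussianReal_eq_integral_smul (by positivity)]
  simp_rw [gaussPdf_eq_gaussianPDFReal, smul_eq_mul, mul_comm]

lemma integral_sq_gaussianReal (μ : ℝ) (v : ℝ≥0) :
    ∫ x, x ^ 2 ∂gaussianReal μ v = v + μ ^ 2 := by
  have h := variance_eq_sub (memLp_id_gaussianReal (μ := μ) (v := v) 2)
  rw [variance_id_gaussianReal] at h
  simp only [Pi.pow_apply, id, integral_id_gaussianReal] at h
  linarith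

lemma integral_quadratic_gaussianReal (μ : ℝ) (v : ℝ≥0) (p q r : ℝ) :
    ∫ x, (p + q * x + r * x ^ 2) ∂gaussianReal μ v = p + q * μ + r * (v + μ ^ 2) := by
  have hx : Integrable (fun x ↦ x) (gaussianReal μ v) :=
    (memLp_id_gaussianReal 1).integrable le_rfl
  have hlin : Integrable (fun x ↦ p + q * x) (gaussianReal μ v) :=
    (integrable_const p).add (hx.const_mul q)
  have hx2 : Integrable (fun x ↦ x ^ 2) (gaussianReal μ v) :=
    (memLp_id_gaussianReal 2).integrable_sq
  rw [integral_add hlin (hx2.const_mul r), integral_add (integrable_const p) (hx.const_mul q),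
    integral_const_mul, integral_const_mul, integral_id_gaussianReal, integral_sq_gaussianReal,
    integral_const, probReal_univ, one_smul]

theorem stmt_5_general (σ : ℝ) (hσ : 0 < σ) (μΔ : ℝ)
    (η : ℝ)
    (ξ : ℝ) (hξ : ξ = |μΔ| / (Real.sqrt 2 * σ))
    (lnBF : ℝ → ℝ)
    (hlnBF : ∀ d, lnBF d = 1 / 2 * (Real.log (1 - η)
        - (1 - η) * ((d - μΔ) / (Real.sqrt 2 * σ)) ^ 2
        + (d / (Real.sqrt 2 * σ)) ^ 2)) :
    (∫ d : ℝ, lnBF d * gaussPdf d 0 (Real.sqrt 2 * σ))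
      = 1 / 2 * (Real.log (1 - η) + η - (1 - η) * ξ ^ 2) := by
  set s := Real.sqrt 2 * σ
  have hs : s ≠ 0 := by positivity
  have hquad (d : ℝ) : lnBF d = (Real.log (1 - η) / 2 - (1 - η) * μΔ ^ 2 / (2 * s ^ 2))
      + (1 - η) * μΔ / s ^ 2 * d + η / (2 * s ^ 2) * d ^ 2 := by
    rw [hlnBF d]
    field_simp
    ring
  simp only [integral_mul_gaussPdf _ 0 hs, hquad, integral_quadratic_gaussianReal]
  rw [Real.coe_toNNReal _ (sq_nonneg s), hξ, div_pow, sq_abs]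
  field_simp
  ring

theorem stmt_5 (σ σΔ : ℝ) (hσ : 0 < σ) (hσΔ : 0 < σΔ) (μΔ : ℝ)
    (η : ℝ) (hη : η = σΔ ^ 2 / (σΔ ^ 2 + 2 * σ ^ 2))
    (ξ : ℝ) (hξ : ξ = |μΔ| / (Real.sqrt 2 * σ))
    (lnBF : ℝ → ℝ)
    (hlnBF : ∀ d, lnBF d = 1 / 2 * (Real.log (1 - η)
        - (1 - η) * ((d - μΔ) / (Real.sqrt 2 * σ)) ^ 2
        + (d / (Real.sqrt 2 * σ)) ^ 2)) :
    (∫ d : ℝ, lnBF d * gaussPdf d 0 (Real.sqrt 2 * σ))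
      = 1 / 2 * (Real.log (1 - η) + η - (1 - η) * ξ ^ 2) :=
  stmt_5_general σ hσ μΔ η ξ hξ lnBF hlnBF
end

section
/- (Savage–Dickey identity for the Gaussian change model.) Let τ > 0, τ_Δ > 0, μ_Δ ∈ ℝ, d_y ∈ ℝ. Then φ(0; μ_Δ, 1/√τ_Δ) / φ(0; (τ d_y + 2 τ_Δ μ_Δ)/(τ + 2 τ_Δ), √(2/(τ + 2 τ_Δ))) = φ(d_y; μ_Δ, √(2/τ + 1/τ_Δ)) / φ(d_y; 0, √(2/τ)). That is, the ratio of the prior density of the true change at d_x = 0 to its posterior density at d_x = 0 given d_y equals the Bayes factor BF₁₀ for the measured change d_y. -/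
lemma key (A B C D a b c d : ℝ) (hA : 0 < A) (hB : 0 < B) (hC : 0 < C) (hD : 0 < D)
    (h1 : A * D = C * B) (h2 : a + d = c + b) :
    A ^ (-(1:ℝ)/2) * Real.exp a / (B ^ (-(1:ℝ)/2) * Real.exp b)
      = C ^ (-(1:ℝ)/2) * Real.exp c / (D ^ (-(1:ℝ)/2) * Real.exp d) := by
  rw [div_eq_div_iff (by positivity) (by positivity)]
  have e1 : A ^ (-(1:ℝ)/2) * Real.exp a * (D ^ (-(1:ℝ)/2) * Real.exp d)
      = (A * D) ^ (-(1:ℝ)/2) * Real.exp (a + d) := by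
    rw [Real.mul_rpow hA.le hD.le, Real.exp_add]; ring
  have e2 : C ^ (-(1:ℝ)/2) * Real.exp c * (B ^ (-(1:ℝ)/2) * Real.exp b)
      = (C * B) ^ (-(1:ℝ)/2) * Real.exp (c + b) := by
    rw [Real.mul_rpow hC.le hB.le, Real.exp_add]; ring
  rw [e1, e2, h1, h2]

/-- Savage–Dickey identity for the Gaussian change model. -/
theorem stmt_9 (τ τΔ : ℝ) (hτ : 0 < τ) (hτΔ : 0 < τΔ) (μΔ dy : ℝ) :
    gaussPdf 0 μΔ (1 / Real.sqrt τΔ)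
        / gaussPdf 0 ((τ * dy + 2 * τΔ * μΔ) / (τ + 2 * τΔ)) (Real.sqrt (2 / (τ + 2 * τΔ)))
      = gaussPdf dy μΔ (Real.sqrt (2 / τ + 1 / τΔ)) / gaussPdf dy 0 (Real.sqrt (2 / τ)) := by
  have hs : (0:ℝ) < τ + 2 * τΔ := by linarith
  have hpi := Real.pi_pos
  have sq1 : (1 / Real.sqrt τΔ) ^ 2 = 1 / τΔ := by
    rw [div_pow, one_pow, Real.sq_sqrt hτΔ.le]
  have sq2 : (Real.sqrt (2 / (τ + 2 * τΔ))) ^ 2 = 2 / (τ + 2 * τΔ) :=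
    Real.sq_sqrt (by positivity)
  have sq3 : (Real.sqrt (2 / τ + 1 / τΔ)) ^ 2 = 2 / τ + 1 / τΔ :=
    Real.sq_sqrt (by positivity)
  have sq4 : (Real.sqrt (2 / τ)) ^ 2 = 2 / τ := Real.sq_sqrt (by positivity)
  unfold gaussPdf
  rw [sq1, sq2, sq3, sq4]
  apply key
  · positivity
  · positivity
  · positivity
  · positivity
  · field_simp; ring
  · field_simp; ring
end

section
/- For all η ∈ [0, 1) and ξ ≥ 0, the expected log Bayes factor under the null model satisfies E₀(η, ξ) := (1/2)·( ln(1 − η) + η − (1 − η)·ξ² ) ≤ 0, with equality if and only if η = 0 and ξ = 0. -/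
theorem stmt_11 (η ξ : ℝ) (hη : η ∈ Set.Ico (0 : ℝ) 1) (hξ : 0 ≤ ξ)
    (E₀ : ℝ) (hE₀ : E₀ = 1 / 2 * (Real.log (1 - η) + η - (1 - η) * ξ ^ 2)) :
    E₀ ≤ 0 ∧ (E₀ = 0 ↔ η = 0 ∧ ξ = 0) := by
  obtain ⟨h0, h1⟩ := hη
  have hpos : 0 < 1 - η := by linarith
  have hlog : Real.log (1 - η) ≤ (1 - η) - 1 := Real.log_le_sub_one_of_pos hpos
  have hterm : 0 ≤ (1 - η) * ξ ^ 2 := mul_nonneg (le_of_lt hpos) (sq_nonneg ξ)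
  constructor
  · rw [hE₀]; nlinarith
  · constructor
    · intro hE
      rw [hE₀] at hE
      by_cases hη0 : η = 0
      · subst hη0
        simp at hE
        constructor
        · rfl
        · nlinarith
      · exfalso
        have hne : 1 - η ≠ 1 := by intro h; apply hη0; linarith
        have := Real.log_lt_sub_one_of_pos hpos hne
        nlinarith
    · rintro ⟨rfl, rfl⟩
      simp [hE₀]
end
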